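/- Inductive unfoldings in THT: for all temporal formulas α,β, the following THT-equivalences hold: α U β ≡ β ∨ (α ∧ ○(α U β)); α R β ≡ β ∧ (α ∨ ○̂(α R β)); α W β ≡ α ∧ (β → ○̂(α W β)). -/
import Mathlib


inductive Formula (A : Type) : Type
  | atom (a : A)
  | falsum
  | verum
  | conj (φ ψ : Formula A)
  | disj (φ ψ : Formula A)
  | impl (φ ψ : Formula A)
  | prev (φ : Formula A)
  | since (φ ψ : Formula A)
  | trigger (φ ψ : Formula A)
  | next (φ : Formula A)
  | untl (φ ψ : Formula A)
  | release (φ ψ : Formula A)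
  | whil (φ ψ : Formula A)

/-- THT satisfaction: `satAux l T H k φ` is `⟨H,T⟩,k ⊨ φ` on traces of length `l`. -/
def satAux {A : Type} (l : ℕ∞) (T : ℕ → Set A) : (ℕ → Set A) → ℕ → Formula A → Prop
  | H, k, .atom a => a ∈ H k
  | _, _, .falsum => False
  | _, _, .verum => True
  | H, k, .conj φ ψ => satAux l T H k φ ∧ satAux l T H k ψ
  | H, k, .disj φ ψ => satAux l T H k φ ∨ satAux l T H k ψ
  | H, k, .impl φ ψ =>
      (satAux l T H k φ → satAux l T H k ψ) ∧ (satAux l T T k φ → satAux l T T k ψ)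
  | H, k, .prev φ => 0 < k ∧ satAux l T H (k - 1) φ
  | H, k, .since φ ψ =>
      ∃ j, j ≤ k ∧ satAux l T H j ψ ∧ ∀ i, j < i → i ≤ k → satAux l T H i φ
  | H, k, .trigger φ ψ =>
      ∀ j, j ≤ k → satAux l T H j ψ ∨ ∃ i, j < i ∧ i ≤ k ∧ satAux l T H i φ
  | H, k, .next φ => ((k + 1 : ℕ) : ℕ∞) < l ∧ satAux l T H (k + 1) φ
  | H, k, .untl φ ψ =>
      ∃ j, k ≤ j ∧ (j : ℕ∞) < l ∧ satAux l T H j ψ ∧ ∀ i, k ≤ i → i < j → satAux l T H i φ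
  | H, k, .release φ ψ =>
      ∀ j, k ≤ j → (j : ℕ∞) < l → satAux l T H j ψ ∨ ∃ i, k ≤ i ∧ i < j ∧ satAux l T H i φ
  | H, k, .whil φ ψ =>
      (∀ j, k ≤ j → (j : ℕ∞) < l →
          satAux l T H j φ ∨ ∃ i, k ≤ i ∧ i < j ∧ ¬ satAux l T H i ψ)
        ∧
      (∀ j, k ≤ j → (j : ℕ∞) < l →
          satAux l T T j φ ∨ ∃ i, k ≤ i ∧ i < j ∧ ¬ satAux l T T i ψ)

/-- `Sat l H T k φ` : the HT-trace `⟨H,T⟩` of length `l` satisfies `φ` at time `k`. -/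
def Sat {A : Type} (l : ℕ∞) (H T : ℕ → Set A) (k : ℕ) (φ : Formula A) : Prop :=
  satAux l T H k φ

/-- `⟨H,T⟩` is an HT-trace of length `l`. -/
def IsHT {A : Type} (l : ℕ∞) (H T : ℕ → Set A) : Prop :=
  ∀ i : ℕ, (i : ℕ∞) < l → H i ⊆ T i

def TraceLe {A : Type} (l : ℕ∞) (H T : ℕ → Set A) : Prop :=
  ∀ i : ℕ, (i : ℕ∞) < l → H i ⊆ T i

def TraceEq {A : Type} (l : ℕ∞) (H T : ℕ → Set A) : Prop :=
  ∀ i : ℕ, (i : ℕ∞) < l → H i = T i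

def TraceLt {A : Type} (l : ℕ∞) (H T : ℕ → Set A) : Prop :=
  TraceLe l H T ∧ ¬ TraceEq l H T

def Formula.neg {A : Type} (φ : Formula A) : Formula A := .impl φ .falsum
def Formula.always {A : Type} (φ : Formula A) : Formula A := .release .falsum φ
def Formula.ev {A : Type} (φ : Formula A) : Formula A := .untl .verum φ
def Formula.final {A : Type} : Formula A := Formula.neg (.next .verum)
def Formula.wnext {A : Type} (φ : Formula A) : Formula A := .disj (.next φ) .final
def Formula.initial {A : Type} : Formula A := Formula.neg (.prev .verum)
def Formula.wprev {A : Type} (φ : Formula A) : Formula A := .disj (.prev φ) .initial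
def Formula.evP {A : Type} (φ : Formula A) : Formula A := .since .verum φ
def Formula.alwP {A : Type} (φ : Formula A) : Formula A := .trigger .falsum φ

/-- THT-equivalence of two formulas. -/
def ThtEquiv {A : Type} (φ ψ : Formula A) : Prop :=
  ∀ (l : ℕ∞) (H T : ℕ → Set A), IsHT l H T →
    ∀ k : ℕ, (k : ℕ∞) < l → (Sat l H T k φ ↔ Sat l H T k ψ)

/-- `⟨H,T⟩` is a model of the theory `Γ`. -/
def IsModel {A : Type} (l : ℕ∞) (H T : ℕ → Set A) (Γ : Set (Formula A)) : Prop :=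
  (0 : ℕ∞) < l ∧ ∀ φ ∈ Γ, Sat l H T 0 φ

/-- `T` (of length `l`) is a temporal stable model of `Γ`. -/
def IsTS {A : Type} (l : ℕ∞) (T : ℕ → Set A) (Γ : Set (Formula A)) : Prop :=
  IsModel l T T Γ ∧ ∀ H : ℕ → Set A, TraceLt l H T → ¬ IsModel l H T Γ


lemma castlt_of_succ {l : ℕ∞} {k : ℕ} (h : ((k+1 : ℕ) : ℕ∞) < l) : (k : ℕ∞) < l :=
  lt_of_le_of_lt (by exact_mod_cast Nat.cast_le.mpr (Nat.le_succ k)) h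

lemma castlt_mono {l : ℕ∞} {j k : ℕ} (hjk : j ≤ k) (h : (k : ℕ∞) < l) : (j : ℕ∞) < l :=
  lt_of_le_of_lt (Nat.cast_le.mpr hjk) h

/-- Persistence: truth in `H` implies truth in `T`. -/
lemma persistence {A : Type} {l : ℕ∞} {H T : ℕ → Set A} (ht : IsHT l H T)
    (φ : Formula A) : ∀ k : ℕ, (k : ℕ∞) < l → satAux l T H k φ → satAux l T T k φ := by
  induction φ with
  | atom a => intro k hk h; exact ht k hk h
  | falsum => intro k _ h; exact h
  | verum => intro k _ _; trivial
  | conj φ ψ ih1 ih2 => intro k hk h; exact ⟨ih1 k hk h.1, ih2 k hk h.2⟩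
  | disj φ ψ ih1 ih2 => intro k hk h; exact h.imp (ih1 k hk) (ih2 k hk)
  | impl φ ψ _ _ => intro k _ h; exact ⟨h.2, h.2⟩
  | prev φ ih =>
      intro k hk h
      exact ⟨h.1, ih (k-1) (castlt_mono (Nat.sub_le k 1) hk) h.2⟩
  | since φ ψ ih1 ih2 =>
      intro k hk h
      obtain ⟨j, hjk, hψ, hφ⟩ := h
      exact ⟨j, hjk, ih2 j (castlt_mono hjk hk) hψ,
        fun i hji hik => ih1 i (castlt_mono hik hk) (hφ i hji hik)⟩
  | trigger φ ψ ih1 ih2 =>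
      intro k hk h j hjk
      rcases h j hjk with hψ | ⟨i, hji, hik, hφ⟩
      · exact Or.inl (ih2 j (castlt_mono hjk hk) hψ)
      · exact Or.inr ⟨i, hji, hik, ih1 i (castlt_mono hik hk) hφ⟩
  | next φ ih => intro k _ h; exact ⟨h.1, ih (k+1) h.1 h.2⟩
  | untl φ ψ ih1 ih2 =>
      intro k _ h
      obtain ⟨j, hkj, hjl, hψ, hφ⟩ := h
      exact ⟨j, hkj, hjl, ih2 j hjl hψ,
        fun i hki hij => ih1 i (castlt_mono (le_of_lt hij) hjl) (hφ i hki hij)⟩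
  | release φ ψ ih1 ih2 =>
      intro k _ h j hkj hjl
      rcases h j hkj hjl with hψ | ⟨i, hki, hij, hφ⟩
      · exact Or.inl (ih2 j hjl hψ)
      · exact Or.inr ⟨i, hki, hij, ih1 i (castlt_mono (le_of_lt hij) hjl) hφ⟩
  | whil φ ψ _ _ => intro k _ h; exact ⟨h.2, h.2⟩

lemma untl_unfold {A : Type} (l : ℕ∞) (T H : ℕ → Set A) (α β : Formula A) (k : ℕ)
    (hk : (k : ℕ∞) < l) :
    satAux l T H k (.untl α β) ↔
      satAux l T H k β ∨ (satAux l T H k α ∧ ((k+1 : ℕ) : ℕ∞) < l ∧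
        satAux l T H (k+1) (.untl α β)) := by
  constructor
  · rintro ⟨j, hkj, hjl, hψ, hφ⟩
    rcases eq_or_lt_of_le hkj with rfl | hlt
    · exact Or.inl hψ
    · refine Or.inr ⟨hφ k le_rfl hlt, castlt_mono hlt hjl, j, hlt, hjl, hψ,
        fun i hi hij => hφ i (le_of_lt (Nat.lt_of_lt_of_le (Nat.lt_succ_self k) hi)) hij⟩
  · rintro (hβ | ⟨hα, hsl, j, hkj, hjl, hψ, hφ⟩)
    · exact ⟨k, le_rfl, hk, hβ, fun i h1 h2 => absurd (lt_of_le_of_lt h1 h2) (lt_irrefl k)⟩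
    · refine ⟨j, le_trans (Nat.le_succ k) hkj, hjl, hψ, fun i hki hij => ?_⟩
      rcases eq_or_lt_of_le hki with rfl | hlt
      · exact hα
      · exact hφ i hlt hij

lemma release_unfold {A : Type} (l : ℕ∞) (T H : ℕ → Set A) (α β : Formula A) (k : ℕ)
    (hk : (k : ℕ∞) < l) :
    satAux l T H k (.release α β) ↔
      satAux l T H k β ∧ (satAux l T H k α ∨
        (((k+1 : ℕ) : ℕ∞) < l → satAux l T H (k+1) (.release α β))) := by
  constructor
  · intro h
    have hβ : satAux l T H k β := by
      rcases h k le_rfl hk with hβ | ⟨i, h1, h2, _⟩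
      · exact hβ
      · exact absurd (lt_of_le_of_lt h1 h2) (lt_irrefl k)
    refine ⟨hβ, ?_⟩
    by_cases hα : satAux l T H k α
    · exact Or.inl hα
    · refine Or.inr (fun _ j hkj hjl => ?_)
      rcases h j (le_trans (Nat.le_succ k) hkj) hjl with hb | ⟨i, hki, hij, ha⟩
      · exact Or.inl hb
      · rcases eq_or_lt_of_le hki with rfl | hlt
        · exact absurd ha hα
        · exact Or.inr ⟨i, hlt, hij, ha⟩
  · rintro ⟨hβ, hrest⟩ j hkj hjl
    rcases eq_or_lt_of_le hkj with rfl | hlt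
    · exact Or.inl hβ
    · rcases hrest with hα | hnext
      · exact Or.inr ⟨k, le_rfl, hlt, hα⟩
      · rcases hnext (castlt_mono hlt hjl) j hlt hjl with hb | ⟨i, hki, hij, ha⟩
        · exact Or.inl hb
        · exact Or.inr ⟨i, le_trans (Nat.le_succ k) hki, hij, ha⟩

/-- One component of the `while` semantics. -/
def Wc {A : Type} (l : ℕ∞) (T G : ℕ → Set A) (α β : Formula A) (k : ℕ) : Prop :=
  ∀ j, k ≤ j → (j : ℕ∞) < l → satAux l T G j α ∨ ∃ i, k ≤ i ∧ i < j ∧ ¬ satAux l T G i β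

lemma whil_eq {A : Type} (l : ℕ∞) (T H : ℕ → Set A) (α β : Formula A) (k : ℕ) :
    satAux l T H k (.whil α β) ↔ Wc l T H α β k ∧ Wc l T T α β k := Iff.rfl

lemma wc_unfold {A : Type} (l : ℕ∞) (T G : ℕ → Set A) (α β : Formula A) (k : ℕ)
    (hk : (k : ℕ∞) < l) :
    Wc l T G α β k ↔
      satAux l T G k α ∧ (satAux l T G k β →
        (((k+1 : ℕ) : ℕ∞) < l → Wc l T G α β (k+1))) := by
  constructor
  · intro h
    have hα : satAux l T G k α := by
      rcases h k le_rfl hk with hα | ⟨i, h1, h2, _⟩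
      · exact hα
      · exact absurd (lt_of_le_of_lt h1 h2) (lt_irrefl k)
    refine ⟨hα, fun hβ _ j hkj hjl => ?_⟩
    rcases h j (le_trans (Nat.le_succ k) hkj) hjl with ha | ⟨i, hki, hij, hb⟩
    · exact Or.inl ha
    · rcases eq_or_lt_of_le hki with rfl | hlt
      · exact absurd hβ hb
      · exact Or.inr ⟨i, hlt, hij, hb⟩
  · rintro ⟨hα, hrest⟩ j hkj hjl
    rcases eq_or_lt_of_le hkj with rfl | hlt
    · exact Or.inl hα
    · by_cases hβ : satAux l T G k β
      · rcases hrest hβ (castlt_mono hlt hjl) j hlt hjl with ha | ⟨i, hki, hij, hb⟩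
        · exact Or.inl ha
        · exact Or.inr ⟨i, le_trans (Nat.le_succ k) hki, hij, hb⟩
      · exact Or.inr ⟨k, le_rfl, hlt, hβ⟩

/-- Inductive unfoldings in THT:
`α U β ≡ β ∨ (α ∧ ○(α U β))`, `α R β ≡ β ∧ (α ∨ ○̂(α R β))`,
`α W β ≡ α ∧ (β → ○̂(α W β))`. -/
theorem inductive_unfoldings {A : Type} (α β : Formula A) :
    ThtEquiv (.untl α β) (.disj β (.conj α (.next (.untl α β))))
    ∧ ThtEquiv (.release α β) (.conj β (.disj α (Formula.wnext (.release α β))))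
    ∧ ThtEquiv (.whil α β) (.conj α (.impl β (Formula.wnext (.whil α β)))) := by
  refine ⟨?_, ?_, ?_⟩
  · intro l H T _ k hk
    show satAux l T H k (.untl α β) ↔ _
    rw [untl_unfold l T H α β k hk]
    show _ ↔ satAux l T H k β ∨ (satAux l T H k α ∧ (((k+1:ℕ):ℕ∞) < l ∧ satAux l T H (k+1) (.untl α β)))
    tauto
  · intro l H T _ k hk
    show satAux l T H k (.release α β) ↔ _
    rw [release_unfold l T H α β k hk]
    simp only [Formula.wnext, Formula.final, Formula.neg, satAux]
    constructor
    · rintro ⟨hβ, hα | hnext⟩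
      · exact ⟨hβ, Or.inl hα⟩
      · by_cases hs : ((k+1 : ℕ) : ℕ∞) < l
        · exact ⟨hβ, Or.inr (Or.inl ⟨hs, hnext hs⟩)⟩
        · exact ⟨hβ, Or.inr (Or.inr ⟨fun h => hs h.1, fun h => hs h.1⟩)⟩
    · rintro ⟨hβ, hα | (⟨hs, hr⟩ | ⟨hf, _⟩)⟩
      · exact ⟨hβ, Or.inl hα⟩
      · exact ⟨hβ, Or.inr (fun _ => hr)⟩
      · exact ⟨hβ, Or.inr (fun hs => absurd ⟨hs, trivial⟩ hf)⟩
  · intro l H T ht k hk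
    show satAux l T H k (.whil α β) ↔ _
    rw [whil_eq]
    rw [wc_unfold l T H α β k hk, wc_unfold l T T α β k hk]
    simp only [Formula.wnext, Formula.final, Formula.neg, satAux, whil_eq]
    constructor
    · rintro ⟨⟨hαH, hH⟩, ⟨hαT, hT⟩⟩
      refine ⟨hαH, ⟨fun hβH => ?_, fun hβT => ?_⟩⟩
      · have hβT := persistence ht β k hk hβH
        by_cases hs : ((k+1 : ℕ) : ℕ∞) < l
        · exact Or.inl ⟨hs, hH hβH hs, hT hβT hs⟩
        · exact Or.inr ⟨fun h => hs h.1, fun h => hs h.1⟩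
      · by_cases hs : ((k+1 : ℕ) : ℕ∞) < l
        · exact Or.inl ⟨hs, hT hβT hs, hT hβT hs⟩
        · exact Or.inr ⟨fun h => hs h.1, fun h => hs h.1⟩
    · rintro ⟨hαH, hH, hT⟩
      have hαT := persistence ht α k hk hαH
      refine ⟨⟨hαH, fun hβH hs => ?_⟩, ⟨hαT, fun hβT hs => ?_⟩⟩
      · rcases hH hβH with ⟨_, h1, _⟩ | ⟨hf, _⟩
        · exact h1
        · exact absurd ⟨hs, trivial⟩ hf
      · rcases hT hβT with ⟨_, _, h2⟩ | ⟨hf, _⟩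
        · exact h2
        · exact absurd ⟨hs, trivial⟩ hf
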